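/- For real x, y with |x| < 1/2 and |y| < 1/2, one has 1/(√(1-4x²) + √(1-4y²)) = ∑_{i,j even ≥ 0} a_{i+j} x^i y^j, where a_i = (1/(i+2))·C(i, i/2). -/

import Mathlib

/-!
With `u = x²`, `v = y²` and `a_{2k} = C_k / 2` (`C_k` the Catalan numbers) the claim reads
`∑_{m,n} C_{m+n} uᵐ vⁿ = 2 / (√(1 - 4u) + √(1 - 4v))`.
For `C(z) = ∑ C_k zᵏ` the Catalan recursion gives `z C(z)² + 1 = C(z)`, so `1 - 2z C(z)` is a
continuous square root of `1 - 4z` taking the value `1` at `0`, hence equals `√(1 - 4z)`.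
Summing along antidiagonals and telescoping `(u - v) ∑_{m+n=k} uᵐ vⁿ = u^{k+1} - v^{k+1}` gives
`(u - v) ∑ C_{m+n} uᵐ vⁿ = u C(u) - v C(v) = (√(1 - 4v) - √(1 - 4u)) / 2`, which is the claim
off the diagonal after multiplying by `√(1 - 4u) + √(1 - 4v)`; the diagonal follows by continuity.
-/

open Finset Filter Topology Metric

noncomputable def aCoef (i : ℕ) : ℝ := (1 / ((i : ℝ) + 2)) * (i.choose (i / 2) : ℝ)

theorem catalan_le_four_pow (n : ℕ) : catalan n ≤ 4 ^ n :=
  calc catalan n ≤ (n + 1) * catalan n := Nat.le_mul_of_pos_left _ n.succ_pos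
    _ = n.centralBinom := succ_mul_catalan_eq_centralBinom n
    _ ≤ 4 ^ n := Nat.centralBinom_le_four_pow n

theorem norm_catalan_mul_pow_le (k : ℕ) (z : ℝ) : ‖(catalan k : ℝ) * z ^ k‖ ≤ (4 * ‖z‖) ^ k := by
  rw [norm_mul, norm_pow, Real.norm_natCast, mul_pow]
  gcongr
  exact_mod_cast catalan_le_four_pow k

theorem summable_norm_catalan_mul_pow {z : ℝ} (hz : ‖z‖ < 1 / 4) :
    Summable fun k => ‖(catalan k : ℝ) * z ^ k‖ :=
  (summable_geometric_of_lt_one (by positivity) (by linarith)).of_nonneg_of_le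
    (fun _ => norm_nonneg _) (norm_catalan_mul_pow_le · z)

noncomputable def catalanGF (z : ℝ) : ℝ := ∑' k, (catalan k : ℝ) * z ^ k

theorem catalanGF_sq_mul_add_one {z : ℝ} (hz : ‖z‖ < 1 / 4) :
    catalanGF z ^ 2 * z + 1 = catalanGF z := by
  have hs := summable_norm_catalan_mul_pow hz
  have hsq : catalanGF z ^ 2 = ∑' n, (catalan (n + 1) : ℝ) * z ^ n := by
    rw [sq, catalanGF, tsum_mul_tsum_eq_tsum_sum_antidiagonal_of_summable_norm hs hs]
    refine tsum_congr fun n => ?_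
    rw [catalan_succ', Nat.cast_sum, sum_mul]
    refine sum_congr rfl fun kl hkl => ?_
    rw [← mem_antidiagonal.mp hkl, pow_add]
    push_cast
    ring
  rw [hsq, ← tsum_mul_right, catalanGF, hs.of_norm.tsum_eq_zero_add]
  simp [pow_succ, mul_assoc, add_comm]

theorem continuousOn_catalanGF : ContinuousOn catalanGF (ball 0 (1 / 4)) := by
  intro z hz
  obtain ⟨r, hzr, hr⟩ := exists_between (mem_ball_zero_iff.mp hz)
  have hr0 : 0 ≤ r := (norm_nonneg z).trans hzr.le
  refine (ContinuousOn.continuousAt ?_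
    (closedBall_mem_nhds_of_mem (mem_ball_zero_iff.mpr hzr))).continuousWithinAt
  refine continuousOn_tsum (fun k => by fun_prop)
    (summable_geometric_of_lt_one (by positivity : 0 ≤ 4 * r) (by linarith)) fun k w hw => ?_
  refine (norm_catalan_mul_pow_le k w).trans ?_
  gcongr
  simpa using hw

theorem one_sub_four_mul_pos {t : ℝ} (ht : ‖t‖ < 1 / 4) : 0 < 1 - 4 * t := by
  rw [Real.norm_eq_abs] at ht
  linarith [le_abs_self t]

theorem sqrt_one_sub_four_mul_eq {z : ℝ} (hz : ‖z‖ < 1 / 4) :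
    √(1 - 4 * z) = 1 - 2 * z * catalanGF z := by
  set S := closedBall (0 : ℝ) ‖z‖
  have hS : S ⊆ ball 0 (1 / 4) := closedBall_subset_ball hz
  have hsmall : ∀ t ∈ S, ‖t‖ < 1 / 4 := fun t ht => mem_ball_zero_iff.mp (hS ht)
  have hsq : Set.EqOn ((fun t => 1 - 2 * t * catalanGF t) ^ 2) ((fun t => √(1 - 4 * t)) ^ 2) S :=
    fun t ht => by
      simp only [Pi.pow_apply]
      rw [Real.sq_sqrt (one_sub_four_mul_pos (hsmall t ht)).le]
      linear_combination 4 * t * catalanGF_sq_mul_add_one (hsmall t ht)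
  have hcont : ContinuousOn catalanGF S := continuousOn_catalanGF.mono hS
  rcases (convex_closedBall (0 : ℝ) ‖z‖).isPreconnected.eq_or_eq_neg_of_sq_eq (by fun_prop)
    (by fun_prop) hsq (fun ht => (Real.sqrt_pos.mpr (one_sub_four_mul_pos (hsmall _ ht))).ne')
    with hsame | hopp
  · exact (hsame (mem_closedBall_zero_iff.mpr le_rfl)).symm
  · have hat0 := hopp (mem_closedBall_self (norm_nonneg z) : (0 : ℝ) ∈ S)
    norm_num at hat0

theorem HasSum.sum_antidiagonal {A α : Type*} [AddCommMonoid A] [HasAntidiagonal A]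
    [AddCommMonoid α] [TopologicalSpace α] [ContinuousAdd α] [RegularSpace α]
    {f : A × A → α} {a : α} (h : HasSum f a) :
    HasSum (fun n => ∑ kl ∈ antidiagonal n, f kl) a :=
  (HasAntidiagonal.sigmaAntidiagonalEquivProd.hasSum_iff.mpr h).sigma fun n => by
    rw [← sum_coe_sort]
    exact hasSum_fintype _

theorem sub_mul_sum_antidiagonal_pow_mul_pow {R : Type*} [CommRing R] (u v : R) (n : ℕ) :
    (u - v) * ∑ kl ∈ antidiagonal n, u ^ kl.1 * v ^ kl.2 = u ^ (n + 1) - v ^ (n + 1) := by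
  induction n with
  | zero => simp
  | succ n ih =>
    rw [Nat.sum_antidiagonal_succ]
    simp only [pow_zero, one_mul, pow_succ' u, mul_assoc, ← mul_sum]
    linear_combination u * ih

theorem norm_catalan_add_mul_pow_mul_pow_le (p : ℕ × ℕ) (u v : ℝ) :
    ‖(catalan (p.1 + p.2) : ℝ) * u ^ p.1 * v ^ p.2‖ ≤ (4 * ‖u‖) ^ p.1 * (4 * ‖v‖) ^ p.2 := by
  rw [norm_mul, norm_mul, norm_pow, norm_pow, Real.norm_natCast]
  calc (catalan (p.1 + p.2) : ℝ) * ‖u‖ ^ p.1 * ‖v‖ ^ p.2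
      ≤ 4 ^ (p.1 + p.2) * ‖u‖ ^ p.1 * ‖v‖ ^ p.2 := by
        gcongr
        exact_mod_cast catalan_le_four_pow _
    _ = (4 * ‖u‖) ^ p.1 * (4 * ‖v‖) ^ p.2 := by ring

theorem summable_norm_catalan_add_mul_pow_mul_pow {u v : ℝ} (hu : ‖u‖ < 1 / 4)
    (hv : ‖v‖ < 1 / 4) :
    Summable fun p : ℕ × ℕ => ‖(catalan (p.1 + p.2) : ℝ) * u ^ p.1 * v ^ p.2‖ :=
  ((summable_geometric_of_lt_one (by positivity) (by linarith)).mul_of_nonneg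
    (summable_geometric_of_lt_one (by positivity) (by linarith)) (fun _ => by positivity)
    (fun _ => by positivity)).of_nonneg_of_le (fun _ => norm_nonneg _)
    (norm_catalan_add_mul_pow_mul_pow_le · u v)

noncomputable def catalanGF₂ (u v : ℝ) : ℝ :=
  ∑' p : ℕ × ℕ, (catalan (p.1 + p.2) : ℝ) * u ^ p.1 * v ^ p.2

theorem sub_mul_catalanGF₂ {u v : ℝ} (hu : ‖u‖ < 1 / 4) (hv : ‖v‖ < 1 / 4) :
    (u - v) * catalanGF₂ u v = u * catalanGF u - v * catalanGF v := by
  have hgrouped := ((summable_norm_catalan_add_mul_pow_mul_pow hu hv).of_norm.hasSum.mul_left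
    (u - v)).sum_antidiagonal
  refine hgrouped.unique ((((summable_norm_catalan_mul_pow hu).of_norm.hasSum.mul_left u).sub
    ((summable_norm_catalan_mul_pow hv).of_norm.hasSum.mul_left v)).congr_fun fun n => ?_)
  calc ∑ kl ∈ antidiagonal n, (u - v) * ((catalan (kl.1 + kl.2) : ℝ) * u ^ kl.1 * v ^ kl.2)
      = catalan n * ((u - v) * ∑ kl ∈ antidiagonal n, u ^ kl.1 * v ^ kl.2) := by
        rw [mul_sum, mul_sum]
        refine sum_congr rfl fun kl hkl => ?_
        rw [mem_antidiagonal.mp hkl]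
        ring
    _ = u * (catalan n * u ^ n) - v * (catalan n * v ^ n) := by
        rw [sub_mul_sum_antidiagonal_pow_mul_pow]
        ring

theorem catalanGF₂_mul_sqrt_add_sqrt_of_ne {u v : ℝ} (hu : ‖u‖ < 1 / 4) (hv : ‖v‖ < 1 / 4)
    (huv : u ≠ v) : catalanGF₂ u v * (√(1 - 4 * u) + √(1 - 4 * v)) = 2 := by
  have hA := Real.sq_sqrt (one_sub_four_mul_pos hu).le
  have hB := Real.sq_sqrt (one_sub_four_mul_pos hv).le
  rw [sqrt_one_sub_four_mul_eq hu] at hA ⊢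
  rw [sqrt_one_sub_four_mul_eq hv] at hB ⊢
  refine mul_left_cancel₀ (sub_ne_zero.mpr huv) ?_
  linear_combination (2 - 2 * u * catalanGF u - 2 * v * catalanGF v) * sub_mul_catalanGF₂ hu hv
    + (1 / 2) * hB - (1 / 2) * hA

theorem continuousOn_catalanGF₂ {u : ℝ} (hu : ‖u‖ < 1 / 4) :
    ContinuousOn (catalanGF₂ u) (ball 0 (1 / 4)) := by
  intro v hv
  obtain ⟨r, hvr, hr⟩ := exists_between (mem_ball_zero_iff.mp hv)
  have hr0 : 0 ≤ r := (norm_nonneg v).trans hvr.le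
  refine (ContinuousOn.continuousAt ?_
    (closedBall_mem_nhds_of_mem (mem_ball_zero_iff.mpr hvr))).continuousWithinAt
  refine continuousOn_tsum (fun p => by fun_prop)
    ((summable_geometric_of_lt_one (by positivity : 0 ≤ 4 * ‖u‖) (by linarith)).mul_of_nonneg
      (summable_geometric_of_lt_one (by positivity : 0 ≤ 4 * r) (by linarith))
      (fun _ => by positivity) (fun _ => by positivity)) fun p w hw => ?_
  refine (norm_catalan_add_mul_pow_mul_pow_le p u w).trans ?_
  gcongr
  simpa using hw

theorem catalanGF₂_eq {u v : ℝ} (hu : ‖u‖ < 1 / 4) (hv : ‖v‖ < 1 / 4) :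
    catalanGF₂ u v = 2 / (√(1 - 4 * u) + √(1 - 4 * v)) := by
  have hpos {w : ℝ} (hw : ‖w‖ < 1 / 4) : √(1 - 4 * u) + √(1 - 4 * w) ≠ 0 :=
    (add_pos (Real.sqrt_pos.mpr (one_sub_four_mul_pos hu))
      (Real.sqrt_pos.mpr (one_sub_four_mul_pos hw))).ne'
  have hoff {w : ℝ} (hw : ‖w‖ < 1 / 4) (hwu : w ≠ u) :
      catalanGF₂ u w = 2 / (√(1 - 4 * u) + √(1 - 4 * w)) :=
    eq_div_of_mul_eq (hpos hw) (catalanGF₂_mul_sqrt_add_sqrt_of_ne hu hw hwu.symm)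
  rcases ne_or_eq v u with hvu | rfl
  · exact hoff hv hvu
  -- on the diagonal, both sides are continuous in `v` and agree on a punctured neighbourhood
  have hball : ball (0 : ℝ) (1 / 4) ∈ 𝓝 v := isOpen_ball.mem_nhds (mem_ball_zero_iff.mpr hv)
  have hrhs : ContinuousAt (fun w => 2 / (√(1 - 4 * v) + √(1 - 4 * w))) v :=
    continuousAt_const.div (by fun_prop) (hpos hv)
  refine tendsto_nhds_unique_of_eventuallyEq (l := 𝓝[≠] v)
    (((continuousOn_catalanGF₂ hv).continuousAt hball).tendsto.mono_left nhdsWithin_le_nhds)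
    (hrhs.tendsto.mono_left nhdsWithin_le_nhds) ?_
  filter_upwards [self_mem_nhdsWithin, nhdsWithin_le_nhds hball] with w hwv hw
  exact hoff (mem_ball_zero_iff.mp hw) hwv

theorem aCoef_two_mul (k : ℕ) : aCoef (2 * k) = catalan k / 2 := by
  have hcentral : ((k : ℝ) + 1) * catalan k = k.centralBinom := by
    exact_mod_cast succ_mul_catalan_eq_centralBinom k
  rw [aCoef, Nat.mul_div_cancel_left k two_pos, ← Nat.centralBinom_eq_two_mul_choose, ← hcentral]
  push_cast
  field_simp

theorem hasSum_ite_even_and_even_iff {α : Type*} [AddCommMonoid α] [TopologicalSpace α]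
    {f : ℕ × ℕ → α} {a : α} :
    HasSum (fun q : ℕ × ℕ => if Even q.1 ∧ Even q.2 then f q else 0) a ↔
      HasSum (fun p : ℕ × ℕ => f (2 * p.1, 2 * p.2)) a := by
  have hinj : Function.Injective fun p : ℕ × ℕ => (2 * p.1, 2 * p.2) := fun p q h => by
    simp only [Prod.mk.injEq] at h
    ext <;> omega
  rw [← hinj.hasSum_iff]
  · simp [Function.comp_def]
  · rintro ⟨m, n⟩ hmn
    rw [if_neg]
    rintro ⟨⟨i, rfl⟩, ⟨j, rfl⟩⟩
    exact hmn ⟨(i, j), by simp [two_mul]⟩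

theorem one_div_A_add_A (x y : ℝ) (hx : |x| < 1 / 2) (hy : |y| < 1 / 2) :
    (Summable fun q : ℕ × ℕ =>
        |if Even q.1 ∧ Even q.2 then aCoef (q.1 + q.2) * x ^ q.1 * y ^ q.2 else 0|) ∧
      1 / (Real.sqrt (1 - 4 * x ^ 2) + Real.sqrt (1 - 4 * y ^ 2))
        = ∑' q : ℕ × ℕ,
            (if Even q.1 ∧ Even q.2 then aCoef (q.1 + q.2) * x ^ q.1 * y ^ q.2 else 0) := by
  have hx2 : ‖x ^ 2‖ < 1 / 4 := by
    rw [norm_pow, Real.norm_eq_abs]; nlinarith [abs_nonneg x]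
  have hy2 : ‖y ^ 2‖ < 1 / 4 := by
    rw [norm_pow, Real.norm_eq_abs]; nlinarith [abs_nonneg y]
  have hterm (p : ℕ × ℕ) : aCoef (2 * p.1 + 2 * p.2) * x ^ (2 * p.1) * y ^ (2 * p.2)
      = (catalan (p.1 + p.2) : ℝ) * (x ^ 2) ^ p.1 * (y ^ 2) ^ p.2 / 2 := by
    rw [← mul_add, aCoef_two_mul, pow_mul, pow_mul]
    ring
  have hsum := summable_norm_catalan_add_mul_pow_mul_pow hx2 hy2
  constructor
  · simp only [apply_ite abs, abs_zero]
    refine (hasSum_ite_even_and_even_iff.mpr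
      ((hsum.div_const 2).hasSum.congr_fun fun p => ?_)).summable
    rw [hterm, abs_div, abs_two, Real.norm_eq_abs]
  · refine (hasSum_ite_even_and_even_iff.mpr ?_).tsum_eq.symm
    simp only [hterm]
    rw [show 1 / (√(1 - 4 * x ^ 2) + √(1 - 4 * y ^ 2)) = catalanGF₂ (x ^ 2) (y ^ 2) / 2 by
      rw [catalanGF₂_eq hx2 hy2]; ring]
    exact hsum.of_norm.hasSum.div_const 2
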